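/- Let n ≥ 4, let t ∈ 𝒯_n be the unique rooted tree with one terminal vertex (the path on n vertices) and t' ∈ 𝒯_n the unique rooted tree with n-1 terminal vertices (the star on n vertices). Then for every 0 ≤ k ≤ n-3, the coefficient of t' in G^k P^k(t) is zero; equivalently, moving from t to t' by pruning k terminal vertices and regrowing k vertices is impossible unless k ≥ n-2. -/

import Mathlib

/-!
Common definitions: rooted unlabeled trees on `n` vertices, the growth/pruning
coefficients `n(t,t')` and `m(t,t')`, the measure `π_n`, the up/down transition
probabilities, the down-up and up-down Markov chains, and separation distance.

A rooted tree is represented as `PreTree.node cs` where `cs` is the list of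
subtrees of the root's children.  An *unlabeled* rooted tree is represented by
its canonical representative (children recursively sorted by an injective
encoding into `ℕ`), and `trees n` is the finite set of canonical rooted trees
on `n` vertices.
-/

namespace RootedTreeChain

inductive PreTree : Type where
  | node : List PreTree → PreTree

namespace PreTree

/- Number of vertices. -/
mutual
  def size : PreTree → ℕ
    | .node cs => 1 + sizeList cs
  def sizeList : List PreTree → ℕ
    | [] => 0
    | t :: ts => size t + sizeList ts
end

mutual
def deq : (a b : PreTree) → Decidable (a = b)
  | .node cs, .node ds =>
    match deqList cs ds with
    | isTrue h => isTrue (by rw [h])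
    | isFalse h => isFalse (by intro hh; cases hh; exact h rfl)
def deqList : (as bs : List PreTree) → Decidable (as = bs)
  | [], [] => isTrue rfl
  | [], _ :: _ => isFalse (by simp)
  | _ :: _, [] => isFalse (by simp)
  | a :: as, b :: bs =>
    match deq a b, deqList as bs with
    | isTrue h1, isTrue h2 => isTrue (by rw [h1, h2])
    | isFalse h1, _ => isFalse (by intro hh; injection hh; contradiction)
    | _, isFalse h2 => isFalse (by intro hh; injection hh; contradiction)
end

instance : DecidableEq PreTree := deq

/- An injective encoding of trees into `ℕ`, used only to sort children
so that each unlabeled rooted tree has a unique canonical representative. -/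
mutual
  def enc : PreTree → ℕ
    | .node cs => encList cs
  def encList : List PreTree → ℕ
    | [] => 0
    | t :: ts => Nat.pair (enc t) (encList ts) + 1
end

/- Canonical representative of the isomorphism class of a rooted tree:
recursively sort the children by their encoding. -/
mutual
  def canon : PreTree → PreTree
    | .node cs => .node ((canonList cs).mergeSort (fun a b => enc a ≤ enc b))
  def canonList : List PreTree → List PreTree
    | [] => []
    | t :: ts => canon t :: canonList ts
end

/-- The one-vertex rooted tree `•`. -/
def leaf : PreTree := .node []

/- The addresses (paths of child indices from the root) of all vertices. -/
mutual
  def positions : PreTree → List (List ℕ)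
    | .node cs => [] :: positionsList 0 cs
  def positionsList : ℕ → List PreTree → List (List ℕ)
    | _, [] => []
    | i, t :: ts => (positions t).map (fun p => i :: p) ++ positionsList (i + 1) ts
end

/- The addresses of all terminal vertices (vertices with no outgoing edge). -/
mutual
  def termPositions : PreTree → List (List ℕ)
    | .node [] => [[]]
    | .node (c :: cs) => termPositionsList 0 (c :: cs)
  def termPositionsList : ℕ → List PreTree → List (List ℕ)
    | _, [] => []
    | i, t :: ts => (termPositions t).map (fun p => i :: p) ++ termPositionsList (i + 1) ts
end

/- Attach a new terminal vertex by an edge to the vertex at address `p`. -/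
mutual
  def addLeafAt : PreTree → List ℕ → PreTree
    | .node cs, [] => .node (cs ++ [leaf])
    | .node cs, i :: p => .node (addLeafAtList cs i p)
  def addLeafAtList : List PreTree → ℕ → List ℕ → List PreTree
    | [], _, _ => []
    | t :: ts, 0, p => addLeafAt t p :: ts
    | t :: ts, i + 1, p => t :: addLeafAtList ts i p
end

/- Remove the (terminal) vertex at address `p` together with the edge into it. -/
mutual
  def removeAt : PreTree → List ℕ → PreTree
    | .node cs, [] => .node cs
    | .node cs, [i] => .node (cs.eraseIdx i)
    | .node cs, i :: p => .node (removeAtList cs i p)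
  def removeAtList : List PreTree → ℕ → List ℕ → List PreTree
    | [], _, _ => []
    | t :: ts, 0, p => removeAt t p :: ts
    | t :: ts, i + 1, p => t :: removeAtList ts i p
end

/-- For `s ↗ t` (and more generally any `s, t` with `size t = size s + 1`),
`ncoef s t` is `n(s,t)`: the number of vertices of `s` to which a new edge can
be added to obtain `t`. -/
def ncoef (s t : PreTree) : ℕ :=
  ((positions s).filter (fun p => canon (addLeafAt s p) = t)).length

/-- For `s ↗ t`, `mcoef s t` is `m(s,t)`: the number of edges of `t` (into a
terminal vertex) which when removed give `s`. -/
def mcoef (s t : PreTree) : ℕ :=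
  ((termPositions t).filter (fun p => canon (removeAt t p) = s)).length

/-- The list of all (canonical representatives of) rooted unlabeled trees on
`n` vertices: every tree on `n+1 ≥ 2` vertices is obtained by attaching a new
terminal vertex to a tree on `n` vertices. -/
def treeList : ℕ → List PreTree
  | 0 => []
  | 1 => [leaf]
  | n + 2 =>
      ((treeList (n + 1)).flatMap
        (fun t => (positions t).map (fun p => canon (addLeafAt t p)))).dedup

/-- The set `𝒯_n` of rooted unlabeled trees on `n` vertices. -/
def trees (n : ℕ) : Finset PreTree := (treeList n).toFinset

/-- `T_n = |𝒯_n|`, the number of rooted unlabeled trees on `n` vertices. -/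
def T (n : ℕ) : ℕ := (trees n).card

/-- Generalized growth coefficients: `nGen k t t'` is the coefficient `n(t,t')`
of `t'` in `G^k(t)` (for `size t' = size t + k`). -/
def nGen : ℕ → PreTree → PreTree → ℕ
  | 0, t, t' => if t = t' then 1 else 0
  | k + 1, t, t' => ((treeList (t.size + k)).map (fun s => nGen k t s * ncoef s t')).sum

/-- Generalized pruning coefficients: `mGen k t t'` is the coefficient `m(t,t')`
of `t` in `P^k(t')` (for `size t' = size t + k`). -/
def mGen : ℕ → PreTree → PreTree → ℕ
  | 0, t, t' => if t = t' then 1 else 0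
  | k + 1, t, t' => ((treeList (t'.size - 1)).map (fun s => mcoef s t' * mGen k t s)).sum

/-- `m(t) = m(•,t)`, the number of ways to take `t` apart by sequentially
removing terminal edges. -/
def mWt (t : PreTree) : ℕ := mGen (t.size - 1) leaf t

/-- `n(t) = n(•,t)`, the number of ways to build `t` up from `•`. -/
def nWt (t : PreTree) : ℕ := nGen (t.size - 1) leaf t

/-- The measure `π_n(t) = m(t) n(t) / ∏_{i=2}^n C(i,2)` on `𝒯_n`. -/
def piM (n : ℕ) (t : PreTree) : ℚ :=
  (mWt t * nWt t : ℚ) / ∏ i ∈ Finset.Icc 2 n, (Nat.choose i 2 : ℚ)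

/-- Upward transition probability `P_u(s,t) = m(s,t) n(t) / (C(n,2) n(s))`
from `s ∈ 𝒯_{n-1}` to `t ∈ 𝒯_n`. -/
def Pu (n : ℕ) (s t : PreTree) : ℚ :=
  (mcoef s t : ℚ) * (nWt t : ℚ) / ((Nat.choose n 2 : ℚ) * (nWt s : ℚ))

/-- Downward transition probability `P_d(t,s) = m(s,t) m(s) / m(t)`
from `t ∈ 𝒯_n` to `s ∈ 𝒯_{n-1}`. -/
def Pd (t s : PreTree) : ℚ :=
  (mcoef s t : ℚ) * (mWt s : ℚ) / (mWt t : ℚ)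

/-- The down-up Markov chain on `𝒯_n`:
`K(t,t') = Σ_{s : s ↗ t, s ↗ t'} P_d(t,s) P_u(s,t')`.  (The sum may be taken
over all `s ∈ 𝒯_{n-1}` since the summand vanishes unless `s ↗ t` and `s ↗ t'`.) -/
def K (n : ℕ) (t t' : PreTree) : ℚ :=
  ∑ s ∈ trees (n - 1), Pd t s * Pu n s t'

/-- `r`-step transition probabilities `K^r(t,t')` of the down-up chain. -/
def Kpow (n : ℕ) : ℕ → PreTree → PreTree → ℚ
  | 0, t, t' => if t = t' then 1 else 0
  | r + 1, t, t' => ∑ s ∈ trees n, K n t s * Kpow n r s t'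

/-- The up-down Markov chain on `𝒯_n`:
`DU_n(t,t') = Σ_{s : s ⋗ t, s ⋗ t'} P_u(t,s) P_d(s,t')`. -/
def DU (n : ℕ) (t t' : PreTree) : ℚ :=
  ∑ s ∈ trees (n + 1), Pu (n + 1) t s * Pd s t'

/-- `r`-step transition probabilities of the up-down chain. -/
def DUpow (n : ℕ) : ℕ → PreTree → PreTree → ℚ
  | 0, t, t' => if t = t' then 1 else 0
  | r + 1, t, t' => ∑ s ∈ trees n, DU n t s * DUpow n r s t'

/-- Maximal separation distance `s^*(r) = max_{t,t' ∈ 𝒯_n} [1 - K^r(t,t')/π_n(t')]`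
of the down-up chain on `𝒯_n`. -/
noncomputable def sStar (n r : ℕ) : ℝ :=
  sSup {x : ℝ | ∃ t ∈ trees n, ∃ t' ∈ trees n,
    x = 1 - (Kpow n r t t' : ℝ) / (piM n t' : ℝ)}

/-- Maximal separation distance of the up-down chain on `𝒯_n`. -/
noncomputable def sStarDU (n r : ℕ) : ℝ :=
  sSup {x : ℝ | ∃ t ∈ trees n, ∃ t' ∈ trees n,
    x = 1 - (DUpow n r t t' : ℝ) / (piM n t' : ℝ)}

/-- The path on `n` vertices (rooted at an end): the unique rooted tree on
`n ≥ 2` vertices with exactly one terminal vertex. -/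
def pathTree : ℕ → PreTree
  | 0 => leaf
  | 1 => leaf
  | n + 2 => .node [pathTree (n + 1)]

/-- The star on `n` vertices (rooted at the center): the unique rooted tree on
`n` vertices with `n-1` terminal vertices. -/
def starTree (n : ℕ) : PreTree := .node (List.replicate (n - 1) leaf)


/- The order of the symmetry group `SG(t) = ∏_{v ∈ t} SG(t,v)`, where for a
vertex `v` with children `v_1, …, v_k`, `SG(t,v)` is generated by the
permutations exchanging isomorphic subtrees rooted at the `v_i`. -/
mutual
  def sgOrder : PreTree → ℕ
    | .node cs => sgOrderList cs *
        ((canonList cs).dedup.map (fun c => Nat.factorial ((canonList cs).count c))).prod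
  def sgOrderList : List PreTree → ℕ
    | [] => 1
    | t :: ts => sgOrder t * sgOrderList ts
end

/- `hProd t = ∏_{v ∈ t} h(v)`, the product over all vertices `v` of `t` of the
number `h(v)` of vertices of the subtree rooted at `v`. -/
mutual
  def hProd : PreTree → ℕ
    | .node cs => size (.node cs) * hProdList cs
  def hProdList : List PreTree → ℕ
    | [] => 1
    | t :: ts => hProd t * hProdList ts
end

/-- The matrix entry of `G P : ℂ𝒯_n → ℂ𝒯_n`: the coefficient of `t'` in `G(P(t))`. -/
def gpEntry (n : ℕ) (t t' : PreTree) : ℕ :=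
  ∑ s ∈ trees (n - 1), mcoef s t * ncoef s t'

/-- The matrix entry of `(G P)^l : ℂ𝒯_n → ℂ𝒯_n`: the coefficient of `t'` in `(GP)^l(t)`. -/
def gpPow (n : ℕ) : ℕ → PreTree → PreTree → ℕ
  | 0, t, t' => if t = t' then 1 else 0
  | l + 1, t, t' => ∑ u ∈ trees n, gpPow n l t u * gpEntry n u t'

end PreTree


/-!
Pruning a path only ever yields a shorter path, while growing a tree never lowers its height.
Hence the only tree `s` on `n - k` vertices with `m(s, path_n) ≠ 0` is `path_{n-k}`, of height
`n - k ≥ 3`, and every tree reachable from it by growth has height at least `3`; the star has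
height `2`.
-/

namespace PreTree

mutual
  def height : PreTree → ℕ
    | .node cs => 1 + heightList cs
  def heightList : List PreTree → ℕ
    | [] => 0
    | t :: ts => max (height t) (heightList ts)
end

theorem heightList_append (l₁ l₂ : List PreTree) :
    heightList (l₁ ++ l₂) = max (heightList l₁) (heightList l₂) := by
  induction l₁ with
  | nil => simp [heightList]
  | cons t ts ih => simp [heightList, ih, max_assoc]

theorem heightList_perm {l₁ l₂ : List PreTree} (h : l₁.Perm l₂) :
    heightList l₁ = heightList l₂ := by
  induction h with
  | nil => rfl
  | cons t _ ih => simp [heightList, ih]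
  | swap t u l => simp only [heightList]; omega
  | trans _ _ ih₁ ih₂ => exact ih₁.trans ih₂

mutual
  theorem height_canon : ∀ t : PreTree, height (canon t) = height t
    | .node cs => by
      simp only [canon, height]
      rw [heightList_perm (List.mergeSort_perm _ _), heightList_canonList]
  theorem heightList_canonList : ∀ l : List PreTree, heightList (canonList l) = heightList l
    | [] => rfl
    | t :: ts => by
      simp only [canonList, heightList, height_canon t, heightList_canonList ts]
end

mutual
  theorem height_le_height_addLeafAt : ∀ (t : PreTree) (p : List ℕ),
      height t ≤ height (addLeafAt t p)
    | .node cs, [] => by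
      simp [addLeafAt, height, heightList_append]
    | .node cs, i :: p => by
      simpa [addLeafAt, height] using heightList_le_heightList_addLeafAtList cs i p
  theorem heightList_le_heightList_addLeafAtList : ∀ (l : List PreTree) (i : ℕ) (p : List ℕ),
      heightList l ≤ heightList (addLeafAtList l i p)
    | [], _, _ => le_rfl
    | t :: _, 0, p => max_le_max (height_le_height_addLeafAt t p) le_rfl
    | _ :: ts, i + 1, p => max_le_max le_rfl (heightList_le_heightList_addLeafAtList ts i p)
end

theorem exists_canon_addLeafAt_eq_of_ncoef_ne_zero {s t : PreTree} (h : ncoef s t ≠ 0) :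
    ∃ p, canon (addLeafAt s p) = t := by
  obtain ⟨p, -, hp⟩ := List.length_filter_pos_iff.mp (Nat.pos_of_ne_zero h)
  exact ⟨p, of_decide_eq_true hp⟩

theorem height_le_height_of_ncoef_ne_zero {s t : PreTree} (h : ncoef s t ≠ 0) :
    height s ≤ height t := by
  obtain ⟨p, rfl⟩ := exists_canon_addLeafAt_eq_of_ncoef_ne_zero h
  rw [height_canon]
  exact height_le_height_addLeafAt s p

theorem height_le_height_of_nGen_ne_zero {k : ℕ} {s t : PreTree} (h : nGen k s t ≠ 0) :
    height s ≤ height t := by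
  induction k generalizing t with
  | zero =>
    rw [nGen, ite_ne_right_iff] at h
    rw [h.1]
  | succ k ih =>
    obtain ⟨_, hx, hne⟩ := List.exists_mem_ne_zero_of_sum_ne_zero h
    obtain ⟨u, -, rfl⟩ := List.mem_map.mp hx
    obtain ⟨hsu, hut⟩ := mul_ne_zero_iff.mp hne
    exact (ih hsu).trans (height_le_height_of_ncoef_ne_zero hut)

theorem termPositions_pathTree : ∀ n, termPositions (pathTree n) = [List.replicate (n - 1) 0]
  | 0 | 1 => rfl
  | n + 2 => by
    simp [pathTree, termPositions, termPositionsList, termPositions_pathTree (n + 1),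
      List.replicate_succ]

theorem removeAt_pathTree : ∀ n, removeAt (pathTree n) (List.replicate (n - 1) 0) = pathTree (n - 1)
  | 0 | 1 | 2 => rfl
  | n + 3 => by
    show node [removeAt (pathTree (n + 2)) (List.replicate (n + 1) 0)] = pathTree (n + 2)
    exact congrArg (node [·]) (removeAt_pathTree (n + 2))

theorem canon_pathTree : ∀ n, canon (pathTree n) = pathTree n
  | 0 | 1 => by simp [pathTree, leaf, canon, canonList]
  | n + 2 => by simp [pathTree, canon, canonList, canon_pathTree (n + 1)]

theorem eq_pathTree_of_mcoef_ne_zero {n : ℕ} {s : PreTree} (h : mcoef s (pathTree n) ≠ 0) :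
    s = pathTree (n - 1) := by
  obtain ⟨p, hp, hs⟩ := List.length_filter_pos_iff.mp (Nat.pos_of_ne_zero h)
  rw [termPositions_pathTree, List.mem_singleton] at hp
  rw [← of_decide_eq_true hs, hp, removeAt_pathTree, canon_pathTree]

theorem eq_pathTree_of_mGen_ne_zero {k n : ℕ} {s : PreTree} (h : mGen k s (pathTree n) ≠ 0) :
    s = pathTree (n - k) := by
  induction k generalizing n with
  | zero =>
    rw [mGen, ite_ne_right_iff] at h
    exact h.1
  | succ k ih =>
    obtain ⟨_, hx, hne⟩ := List.exists_mem_ne_zero_of_sum_ne_zero h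
    obtain ⟨u, -, rfl⟩ := List.mem_map.mp hx
    obtain ⟨hu, hsu⟩ := mul_ne_zero_iff.mp hne
    rw [eq_pathTree_of_mcoef_ne_zero hu] at hsu
    rw [ih hsu, Nat.sub_sub, Nat.add_comm]

theorem height_pathTree : ∀ n, height (pathTree (n + 1)) = n + 1
  | 0 => rfl
  | n + 1 => by
    show 1 + max (height (pathTree (n + 1))) 0 = n + 2
    rw [height_pathTree n]
    omega

theorem heightList_replicate_leaf (n : ℕ) : heightList (List.replicate (n + 1) leaf) = 1 := by
  induction n with
  | zero => rfl
  | succ n ih => rw [List.replicate_succ, heightList, ih]; rfl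

theorem height_starTree (n : ℕ) : height (starTree (n + 2)) = 2 := by
  show height (node (List.replicate (n + 1) leaf)) = 2
  rw [height, heightList_replicate_leaf]

end PreTree

open PreTree in
/-- Let `n ≥ 4`, let `t ∈ 𝒯_n` be the path on `n` vertices (the
unique rooted tree with one terminal vertex) and `t' ∈ 𝒯_n` the star on `n`
vertices (the unique rooted tree with `n-1` terminal vertices).  For every
`0 ≤ k ≤ n-3`, the coefficient of `t'` in `G^k P^k (t)`, namely
`Σ_{s ∈ 𝒯_{n-k}} m(s,t) n(s,t')`, is zero: one cannot move from `t` to `t'` by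
pruning `k` terminal vertices and regrowing `k` vertices unless `k ≥ n-2`. -/
theorem path_to_star_needs_pruning (n k : ℕ) (hn : 4 ≤ n) (hk : k ≤ n - 3) :
    ∑ s ∈ trees (n - k), mGen k s (pathTree n) * nGen k s (starTree n) = 0 := by
  refine Finset.sum_eq_zero fun s _ => mul_eq_zero.mpr (or_iff_not_imp_left.mpr fun hprune => ?_)
  rw [eq_pathTree_of_mGen_ne_zero hprune]
  by_contra hgrow
  have hheight := height_le_height_of_nGen_ne_zero hgrow
  obtain ⟨m, hm⟩ : ∃ m, n - k = m + 3 := ⟨n - k - 3, by omega⟩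
  obtain ⟨j, rfl⟩ : ∃ j, n = j + 2 := ⟨n - 2, by omega⟩
  rw [hm, height_pathTree, height_starTree] at hheight
  omega

end RootedTreeChain
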